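/- Let x̂ be in the interior of the second-order cone K ⊆ ℝ^d. Every obliquely truncated cone C(w,v) = {x ∈ K : wᵀx ≤ wᵀv} (with w, v interior points of K) containing x̂ has volume at least (x̂_0² - ‖x̂_1‖²)^{d/2} · V_d. -/

import Mathlib

/-!
Write `x₀ = ⟪e, x⟫` and `q(x) = x₀² - ‖x - x₀ e‖²` for the Minkowski form, and let `λ = √q(x̂)`,
`μ = √q(w)`. The vector `u = μ⁻¹ (2 w₀ e - w)` lies in `K` with `q(u) = 1`, and pairing with `u`
in the Minkowski form is `μ⁻¹ ⟪w, ·⟫`. A Lorentz boost `L` sending `e` to `u` is a product of two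
reflections for the Minkowski form, so `|det L| = 1`; it preserves `K` and `⟪w, L x⟫ = μ x₀`.
By the reverse Cauchy–Schwarz inequality `λ μ ≤ ⟪w, x̂⟫ ≤ ⟪w, v⟫`, so `λ L` maps `C(e, e)` into
`C(w, v)`, and `|det (λ L)| = λ^d`.
-/

open scoped BigOperators RealInnerProductSpace
open MeasureTheory

/-- The second-order cone in `ℝ^{n+1}`. -/
def socE (n : ℕ) : Set (EuclideanSpace ℝ (Fin (n + 1))) :=
  {x | Real.sqrt (∑ j : Fin n, x j.succ ^ 2) ≤ x 0}

/-- The interior of the second-order cone. -/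
def socIntE (n : ℕ) : Set (EuclideanSpace ℝ (Fin (n + 1))) :=
  {x | Real.sqrt (∑ j : Fin n, x j.succ ^ 2) < x 0}

/-- The (obliquely) truncated second-order cone `C(w,v) = {x ∈ K : wᵀx ≤ wᵀv}`. -/
def Ctrunc (n : ℕ) (w v : EuclideanSpace ℝ (Fin (n + 1))) :
    Set (EuclideanSpace ℝ (Fin (n + 1))) :=
  {x ∈ socE n | ⟪w, x⟫ ≤ ⟪w, v⟫}

/-- The unit vector `e = (1; 0)`. -/
noncomputable def eSOC (n : ℕ) : EuclideanSpace ℝ (Fin (n + 1)) :=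
  EuclideanSpace.single 0 1


lemma LinearMap.abs_det_eq_one_of_involutive {R M : Type*} [CommRing R] [LinearOrder R]
    [IsStrictOrderedRing R] [AddCommGroup M] [Module R M] {f : M →ₗ[R] M}
    (hf : Function.Involutive f) : |LinearMap.det f| = 1 := by
  have h := congrArg LinearMap.det (LinearMap.ext hf : f ∘ₗ f = LinearMap.id)
  rw [LinearMap.det_comp, LinearMap.det_id] at h
  rcases mul_self_eq_one_iff.mp h with h | h <;> simp [h]

lemma LinearMap.IsOrthogonal.isAdjointPair_of_involutive {R M : Type*} [CommRing R]
    [AddCommGroup M] [Module R M] {B : LinearMap.BilinForm R M} {f : M → M}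
    (hB : B.IsOrthogonal f) (hf : Function.Involutive f) : B.IsAdjointPair B f f :=
  fun x y => by rw [← hB x (f y), hf]

namespace LinearMap.IsReflective

variable {K M : Type*} [Field K] [AddCommGroup M] [Module K M] {B : LinearMap.BilinForm K M}
  {s : M}

lemma of_apply_self_ne_zero [NeZero (2 : K)] (hs : B s s ≠ 0) : B.IsReflective s :=
  of_dvd_two B hs.isUnit.dvd

lemma coroot_apply (hs : B.IsReflective s) (y : M) : coroot B hs y = 2 * B s y / B s s := by
  rw [eq_div_iff hs.regular.ne_zero, mul_comm, apply_self_mul_coroot_apply]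

end LinearMap.IsReflective

section LorentzCone

variable {V : Type*} [NormedAddCommGroup V] [InnerProductSpace ℝ V] {e : V}

/-- For a unit vector `e`, writing `x = x₀ e + x₁` with `x₁ ⟂ e`, this is the Minkowski form
`x₀ y₀ - ⟪x₁, y₁⟫`. -/
noncomputable def minkowskiForm (e : V) : LinearMap.BilinForm ℝ V :=
  2 • (innerₗ V e).smulRight (innerₗ V e) - innerₗ V

local notation "𝔪" => minkowskiForm

@[simp]
lemma minkowskiForm_apply (x y : V) : 𝔪 e x y = 2 * ⟪e, x⟫ * ⟪e, y⟫ - ⟪x, y⟫ := by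
  simp [minkowskiForm, mul_assoc]

lemma isSymm_minkowskiForm (e : V) : LinearMap.IsSymm (𝔪 e) :=
  ⟨fun x y => by simp only [minkowskiForm_apply, RingHom.id_apply, real_inner_comm]; ring⟩

def lorentzCone (e : V) : Set V := {x | ‖x - ⟪e, x⟫ • e‖ ≤ ⟪e, x⟫}

def truncatedCone (e w v : V) : Set V := {x ∈ lorentzCone e | ⟪w, x⟫ ≤ ⟪w, v⟫}

lemma minkowskiForm_left_self (he : ‖e‖ = 1) (y : V) : 𝔪 e e y = ⟪e, y⟫ := by
  rw [minkowskiForm_apply, real_inner_self_eq_norm_sq, he]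
  ring

lemma minkowskiForm_self_eq (he : ‖e‖ = 1) (x : V) :
    𝔪 e x x = ⟪e, x⟫ ^ 2 - ‖x - ⟪e, x⟫ • e‖ ^ 2 := by
  rw [minkowskiForm_apply, norm_sub_sq_real, norm_smul, real_inner_smul_right, he,
    real_inner_self_eq_norm_sq, real_inner_comm, Real.norm_eq_abs, mul_one, sq_abs]
  ring

lemma inner_eq_mul_add_inner_sub_smul (he : ‖e‖ = 1) (x y : V) :
    ⟪x, y⟫ = ⟪e, x⟫ * ⟪e, y⟫ + ⟪x - ⟪e, x⟫ • e, y - ⟪e, y⟫ • e⟫ := by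
  simp only [inner_sub_left, inner_sub_right, real_inner_smul_left, real_inner_smul_right,
    real_inner_self_eq_norm_sq, he, real_inner_comm x e]
  ring

lemma minkowskiForm_two_inner_smul_sub (he : ‖e‖ = 1) (w y : V) :
    𝔪 e ((2 * ⟪e, w⟫) • e - w) y = ⟪w, y⟫ := by
  simp only [minkowskiForm_apply, inner_sub_left, inner_sub_right, real_inner_smul_left,
    real_inner_smul_right, real_inner_self_eq_norm_sq, he]
  ring

lemma mem_lorentzCone_iff (he : ‖e‖ = 1) {x : V} :
    x ∈ lorentzCone e ↔ 0 ≤ ⟪e, x⟫ ∧ 0 ≤ 𝔪 e x x := by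
  rw [minkowskiForm_self_eq he, sub_nonneg]
  change ‖x - ⟪e, x⟫ • e‖ ≤ ⟪e, x⟫ ↔ _
  constructor
  · intro h
    exact ⟨(norm_nonneg _).trans h, pow_le_pow_left₀ (norm_nonneg _) h 2⟩
  · rintro ⟨h0, h⟩
    exact (pow_le_pow_iff_left₀ (norm_nonneg _) h0 two_ne_zero).mp h

lemma smul_mem_lorentzCone {c : ℝ} (hc : 0 ≤ c) {x : V} (hx : x ∈ lorentzCone e) :
    c • x ∈ lorentzCone e := by
  have : c • x - ⟪e, c • x⟫ • e = c • (x - ⟪e, x⟫ • e) := by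
    rw [real_inner_smul_right, smul_sub, smul_smul]
  change ‖c • x - ⟪e, c • x⟫ • e‖ ≤ ⟪e, c • x⟫
  rw [this, norm_smul, Real.norm_of_nonneg hc, real_inner_smul_right]
  exact mul_le_mul_of_nonneg_left hx hc

/-- The reverse Cauchy–Schwarz (Aczél) inequality. -/
lemma sqrt_mul_sqrt_le_inner (he : ‖e‖ = 1) {x y : V} (hx : x ∈ lorentzCone e)
    (hy : y ∈ lorentzCone e) : √(𝔪 e x x) * √(𝔪 e y y) ≤ ⟪x, y⟫ := by
  have hpq : ‖x - ⟪e, x⟫ • e‖ * ‖y - ⟪e, y⟫ • e‖ ≤ ⟪e, x⟫ * ⟪e, y⟫ :=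
    mul_le_mul hx hy (norm_nonneg _) ((mem_lorentzCone_iff he).mp hx).1
  have hcs := neg_le_of_abs_le (abs_real_inner_le_norm (x - ⟪e, x⟫ • e) (y - ⟪e, y⟫ • e))
  rw [minkowskiForm_self_eq he, minkowskiForm_self_eq he, inner_eq_mul_add_inner_sub_smul he x y,
    ← Real.sqrt_mul (sub_nonneg.mpr (pow_le_pow_left₀ (norm_nonneg _) hx 2))]
  set a := ⟪e, x⟫
  set b := ⟪e, y⟫
  set p := ‖x - a • e‖
  set q := ‖y - b • e‖
  calc √((a ^ 2 - p ^ 2) * (b ^ 2 - q ^ 2)) ≤ √((a * b - p * q) ^ 2) :=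
        Real.sqrt_le_sqrt (by nlinarith [sq_nonneg (a * q - b * p)])
    _ = a * b - p * q := Real.sqrt_sq (sub_nonneg.mpr hpq)
    _ ≤ a * b + ⟪x - a • e, y - b • e⟫ := by linarith

lemma mapsTo_lorentzCone_of_isOrthogonal (he : ‖e‖ = 1) {L : V → V} (hL : (𝔪 e).IsOrthogonal L)
    {a : V} (ha : a ∈ lorentzCone e) (hLa : ∀ x, ⟪e, L x⟫ = ⟪a, x⟫) :
    Set.MapsTo L (lorentzCone e) (lorentzCone e) := by
  intro x hx
  refine (mem_lorentzCone_iff he).mpr ⟨?_, ?_⟩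
  · calc 0 ≤ √(𝔪 e a a) * √(𝔪 e x x) := by positivity
      _ ≤ ⟪a, x⟫ := sqrt_mul_sqrt_le_inner he ha hx
      _ = ⟪e, L x⟫ := (hLa x).symm
  · rw [hL]
    exact ((mem_lorentzCone_iff he).mp hx).2

/-- The boost `L` is the product of the `𝔪 e`-reflections in `e` and in `u + e`;
it sends `e` to `u`. -/
lemma exists_lorentzBoost (he : ‖e‖ = 1) {u : V} (hu : 𝔪 e u u = 1) (hu0 : 0 ≤ ⟪e, u⟫) :
    ∃ L : V →ₗ[ℝ] V, |LinearMap.det L| = 1 ∧ Set.MapsTo L (lorentzCone e) (lorentzCone e) ∧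
      ∀ x, 𝔪 e u (L x) = ⟪e, x⟫ := by
  have hee : 𝔪 e e e = 1 := by
    rw [minkowskiForm_left_self he, real_inner_self_eq_norm_sq, he, one_pow]
  have hse : 𝔪 e (u + e) e = 1 + ⟪e, u⟫ := by
    rw [map_add, LinearMap.add_apply, ← (isSymm_minkowskiForm e).eq, RingHom.id_apply,
      minkowskiForm_left_self he, hee, add_comm]
  have hss : 𝔪 e (u + e) (u + e) = 2 * (1 + ⟪e, u⟫) := by
    rw [map_add, hse, map_add, LinearMap.add_apply, hu, minkowskiForm_left_self he]
    ring
  have hrs : (𝔪 e).IsReflective (u + e) := .of_apply_self_ne_zero (by rw [hss]; positivity)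
  have hre : (𝔪 e).IsReflective e := .of_apply_self_ne_zero (by rw [hee]; exact one_ne_zero)
  set rs := Module.reflection (LinearMap.IsReflective.coroot_apply_self _ hrs)
  set re := Module.reflection (LinearMap.IsReflective.coroot_apply_self _ hre)
  have os : (𝔪 e).IsOrthogonal rs := hrs.isOrthogonal_reflection _ (isSymm_minkowskiForm e)
  have oe : (𝔪 e).IsOrthogonal re := hre.isOrthogonal_reflection _ (isSymm_minkowskiForm e)
  have hrs_e : rs e = -u := by
    rw [Module.reflection_apply, hrs.coroot_apply, hse, hss, div_self (by positivity), one_smul]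
    abel
  have hre_u : re u = u - (2 * ⟪e, u⟫) • e := by
    rw [Module.reflection_apply, hre.coroot_apply, hee, minkowskiForm_left_self he, div_one]
  have huK : u ∈ lorentzCone e := (mem_lorentzCone_iff he).mpr ⟨hu0, hu ▸ zero_le_one⟩
  have htime : ∀ x, ⟪e, rs (re x)⟫ = ⟪u, x⟫ := fun x => by
    rw [← minkowskiForm_left_self he, ← os.isAdjointPair_of_involutive
      (Module.involutive_reflection _), ← oe.isAdjointPair_of_involutive
      (Module.involutive_reflection _), hrs_e, map_neg, hre_u, neg_sub,
      minkowskiForm_two_inner_smul_sub he]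
  refine ⟨rs.toLinearMap ∘ₗ re.toLinearMap, ?_,
    mapsTo_lorentzCone_of_isOrthogonal he (fun x y => (os _ _).trans (oe x y)) huK htime,
    fun x => ?_⟩
  · rw [LinearMap.det_comp, abs_mul,
      LinearMap.abs_det_eq_one_of_involutive (Module.involutive_reflection _),
      LinearMap.abs_det_eq_one_of_involutive (Module.involutive_reflection _), one_mul]
  · have hLe : rs (re e) = u := by
      rw [Module.reflection_apply_self, map_neg, hrs_e, neg_neg]
    rw [← hLe, LinearMap.comp_apply, LinearEquiv.coe_coe, LinearEquiv.coe_coe, os, oe,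
      minkowskiForm_left_self he]

open Module in
theorem ofReal_rpow_mul_addHaar_truncatedCone_le [FiniteDimensional ℝ V] [MeasurableSpace V]
    [BorelSpace V] (μ : Measure V) [μ.IsAddHaarMeasure] (he : ‖e‖ = 1) {x w v : V}
    (hw : w ∈ lorentzCone e) (hww : 0 < 𝔪 e w w) (hx : x ∈ truncatedCone e w v) :
    ENNReal.ofReal (𝔪 e x x ^ ((finrank ℝ V : ℝ) / 2)) * μ (truncatedCone e e e) ≤
      μ (truncatedCone e w v) := by
  set lam := √(𝔪 e x x)
  set m := √(𝔪 e w w)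
  have hm : 0 < m := Real.sqrt_pos.2 hww
  set u := m⁻¹ • ((2 * ⟪e, w⟫) • e - w)
  have hu : ∀ y, 𝔪 e u y = m⁻¹ * ⟪w, y⟫ := fun y => by
    rw [map_smul, LinearMap.smul_apply, minkowskiForm_two_inner_smul_sub he, smul_eq_mul]
  have huu : 𝔪 e u u = 1 := by
    have : ⟪w, (2 * ⟪e, w⟫) • e - w⟫ = m ^ 2 := by
      rw [Real.sq_sqrt hww.le, minkowskiForm_apply, inner_sub_right, real_inner_smul_right,
        real_inner_comm w e]
    rw [hu, real_inner_smul_right, this]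
    field_simp
  have hu0 : 0 ≤ ⟪e, u⟫ := by
    have : ⟪e, u⟫ = m⁻¹ * ⟪e, w⟫ := by
      simp only [u, real_inner_smul_right, inner_sub_right, real_inner_self_eq_norm_sq, he]
      ring
    rw [this]
    exact mul_nonneg (inv_nonneg.mpr hm.le) ((mem_lorentzCone_iff he).mp hw).1
  obtain ⟨L, hdet, hK, hL⟩ := exists_lorentzBoost he huu hu0
  have hmaps : Set.MapsTo (lam • L) (truncatedCone e e e) (truncatedCone e w v) := by
    rintro y ⟨hyK, hy⟩
    refine ⟨smul_mem_lorentzCone (Real.sqrt_nonneg _) (hK hyK), ?_⟩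
    have hy1 : ⟪e, y⟫ ≤ 1 := by rwa [real_inner_self_eq_norm_sq, he, one_pow] at hy
    have hwL : ⟪w, L y⟫ = m * ⟪e, y⟫ := by
      rw [← hL y, hu, mul_inv_cancel_left₀ hm.ne']
    calc ⟪w, (lam • L) y⟫ = lam * m * ⟪e, y⟫ := by
          rw [LinearMap.smul_apply, real_inner_smul_right, hwL, mul_assoc]
      _ ≤ lam * m := mul_le_of_le_one_right (by positivity) hy1
      _ ≤ ⟪w, x⟫ := by rw [real_inner_comm]; exact sqrt_mul_sqrt_le_inner he hx.1 hw
      _ ≤ ⟪w, v⟫ := hx.2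
  have hpow : 𝔪 e x x ^ ((finrank ℝ V : ℝ) / 2) = lam ^ finrank ℝ V := by
    rw [show lam = _ from Real.sqrt_eq_rpow _, ← Real.rpow_natCast,
      ← Real.rpow_mul ((mem_lorentzCone_iff he).mp hx.1).2]
    ring_nf
  calc ENNReal.ofReal (𝔪 e x x ^ ((finrank ℝ V : ℝ) / 2)) * μ (truncatedCone e e e)
      = ENNReal.ofReal |LinearMap.det (lam • L)| * μ (truncatedCone e e e) := by
        rw [LinearMap.det_smul, abs_mul, hdet, abs_pow, abs_of_nonneg (Real.sqrt_nonneg _),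
          mul_one, hpow]
    _ = μ ((lam • L) '' truncatedCone e e e) := (Measure.addHaar_image_linearMap μ _ _).symm
    _ ≤ μ (truncatedCone e w v) := measure_mono hmaps.image_subset

end LorentzCone

section SecondOrderCone

variable {n : ℕ}

lemma norm_eSOC : ‖eSOC n‖ = 1 := by
  simp [eSOC]

lemma inner_eSOC (x : EuclideanSpace ℝ (Fin (n + 1))) : ⟪eSOC n, x⟫ = x 0 := by
  simp [eSOC, EuclideanSpace.inner_single_left]

lemma minkowskiForm_eSOC_self (x : EuclideanSpace ℝ (Fin (n + 1))) :
    minkowskiForm (eSOC n) x x = x 0 ^ 2 - ∑ j : Fin n, x j.succ ^ 2 := by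
  rw [minkowskiForm_apply, inner_eSOC, real_inner_self_eq_norm_sq,
    EuclideanSpace.real_norm_sq_eq, Fin.sum_univ_succ]
  ring

lemma socE_eq_lorentzCone : socE n = lorentzCone (eSOC n) := by
  ext x
  rw [mem_lorentzCone_iff norm_eSOC, minkowskiForm_eSOC_self, inner_eSOC, sub_nonneg]
  exact Real.sqrt_le_iff

lemma Ctrunc_eq_truncatedCone (w v : EuclideanSpace ℝ (Fin (n + 1))) :
    Ctrunc n w v = truncatedCone (eSOC n) w v := by
  rw [Ctrunc, truncatedCone, socE_eq_lorentzCone]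

lemma socIntE_subset_socE : socIntE n ⊆ socE n :=
  fun _ hx => le_of_lt (α := ℝ) hx

lemma minkowskiForm_eSOC_self_pos {x : EuclideanSpace ℝ (Fin (n + 1))} (hx : x ∈ socIntE n) :
    0 < minkowskiForm (eSOC n) x x := by
  rw [minkowskiForm_eSOC_self, sub_pos]
  exact (Real.sqrt_lt' ((Real.sqrt_nonneg _).trans_lt hx)).mp hx

end SecondOrderCone

theorem stmt10_general (n : ℕ) (xhat : EuclideanSpace ℝ (Fin (n + 1)))
    (w v : EuclideanSpace ℝ (Fin (n + 1))) (hw : w ∈ socIntE n)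
    (hmem : xhat ∈ Ctrunc n w v) :
    ENNReal.ofReal ((xhat 0 ^ 2 - ∑ j : Fin n, xhat j.succ ^ 2) ^ (((n : ℝ) + 1) / 2)) *
        volume (Ctrunc n (eSOC n) (eSOC n)) ≤ volume (Ctrunc n w v) := by
  have hwK : w ∈ lorentzCone (eSOC n) := socE_eq_lorentzCone ▸ socIntE_subset_socE hw
  rw [Ctrunc_eq_truncatedCone] at hmem
  have h := ofReal_rpow_mul_addHaar_truncatedCone_le volume norm_eSOC hwK
    (minkowskiForm_eSOC_self_pos hw) hmem
  rwa [finrank_euclideanSpace_fin, Nat.cast_add_one, minkowskiForm_eSOC_self,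
    ← Ctrunc_eq_truncatedCone, ← Ctrunc_eq_truncatedCone] at h

/-- every obliquely truncated cone `C(w,v)` (with `w, v` interior)
containing an interior point `x̂` has volume at least `(x̂₀² - ‖x̂₁‖²)^{d/2} ⬝ V_d`. -/
theorem stmt10 (n : ℕ) (xhat : EuclideanSpace ℝ (Fin (n + 1))) (hx : xhat ∈ socIntE n)
    (w v : EuclideanSpace ℝ (Fin (n + 1))) (hw : w ∈ socIntE n) (hv : v ∈ socIntE n)
    (hmem : xhat ∈ Ctrunc n w v) :
    ENNReal.ofReal ((xhat 0 ^ 2 - ∑ j : Fin n, xhat j.succ ^ 2) ^ (((n : ℝ) + 1) / 2)) *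
        volume (Ctrunc n (eSOC n) (eSOC n)) ≤ volume (Ctrunc n w v) :=
  stmt10_general n xhat w v hw hmem
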